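/- arXiv:1407.0332 — 2 statements merged into one kernel-verified Lean document; each statement's English description precedes it below -/
import Mathlib

section
/- Let l be even and let T = C ∪ C' be the union of two l-gons C, C' glued along an embedded path A = C ∩ C' with l/4 < |A| < l/2. Let α_+, α_− ⊂ A be the two disjoint subpaths of length ⌈|A| − l/4⌉ containing the endpoints of A, and let s_± be the symmetry of α_± exchanging its endpoints. Define a relation on edge midpoints of T: in C it is the antipodal relation; in C', whenever x and y are antipodal in C' and y lies in the interior of α_±, put x ∼ s_±(y), and otherwise relate antipodal pairs. Then for any two edge midpoints x, x' of T lying in the same equivalence class of the relation generated by the relations in C and C', the distance between x and x' in the 1-skeleton T^{(1)} is at least Bal(T) = (3/4)l − |A|. -/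
open scoped Classical

noncomputable section

namespace BalancedWalls

/-- The vertices of the complex `T = C ∪ C'`: two combinatorial `l`--gons
(`false` = the cell `C`, `true` = the cell `C'`), whose boundary vertices are
indexed by `ZMod l`, glued along the path `A` through the vertices `0, …, a`
(so `A` consists of the edges `0, …, a-1` of each cell). -/
def gluedSetoid (l a : ℕ) : Setoid (Bool × ZMod l) where
  r x y := x = y ∨ (x.2 = y.2 ∧ x.2.val ≤ a)
  iseqv := by
    constructor
    · intro x; left; rfl
    · intro x y h
      rcases h with h | ⟨h1, h2⟩
      · left; exact h.symm
      · right; exact ⟨h1.symm, h1 ▸ h2⟩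
    · intro x y z hxy hyz
      rcases hxy with rfl | ⟨h1, h2⟩
      · exact hyz
      · rcases hyz with rfl | ⟨h3, h4⟩
        · right; exact ⟨h1, h2⟩
        · right; exact ⟨h1.trans h3, h2⟩

/-- The vertex set of `T`. -/
def Glued (l a : ℕ) : Type := Quotient (gluedSetoid l a)

/-- The vertex `k` of the cell `b`. -/
def gv (l a : ℕ) (b : Bool) (k : ZMod l) : Glued l a :=
  Quotient.mk (gluedSetoid l a) (b, k)

/-- The `1`--skeleton `T⁽¹⁾`. -/
def Tgraph (l a : ℕ) : SimpleGraph (Glued l a) :=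
  SimpleGraph.fromEdgeSet {e | ∃ b k, e = s(gv l a b k, gv l a b (k + 1))}

/-- The midpoint of the `k`-th boundary edge of the cell `b`, recorded as the
unordered pair of its endpoints. -/
def mid (l a : ℕ) (b : Bool) (k : ZMod l) : Sym2 (Glued l a) :=
  s(gv l a b k, gv l a b (k + 1))

/-- The pairing of edge midpoints of the cell `C'` described in the
Introduction, on edge indices.  Here `α₊` consists of the edges
`k0, …, k0+e-1` and `α₋` of the edges `k0+a-e, …, k0+a-1` of the gluing path
`A` (the edges `k0, …, k0+a-1`), where `e = ⌈a - l/4⌉`, and `s₊, s₋` are the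
symmetries of `α₊, α₋` exchanging their endpoints.  A midpoint `x` antipodal to
a midpoint `y` interior to `α₊` (resp. `α₋`) is paired with `s₊(y)`
(resp. `s₋(y)`); all other midpoints are paired antipodally. -/
def partnerIdx {l : ℕ} (a e : ℕ) (k0 t : ZMod l) : ZMod l :=
  let j := (t - k0).val
  if j < e then k0 + ((e - 1 - j : ℕ) : ZMod l) + ((l / 2 : ℕ) : ZMod l)
  else if a - e ≤ j ∧ j < a then
    k0 + ((2 * a - e - 1 - j : ℕ) : ZMod l) + ((l / 2 : ℕ) : ZMod l)
  else
    let y := t + ((l / 2 : ℕ) : ZMod l)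
    let i := (y - k0).val
    if i < e then k0 + ((e - 1 - i : ℕ) : ZMod l)
    else if a - e ≤ i ∧ i < a then k0 + ((2 * a - e - 1 - i : ℕ) : ZMod l)
    else y

/-- The relation `∼` on edge midpoints of `T`: in `C` (the cell `false`) it is
the antipodal relation, and in `C'` (the cell `true`) it is the modified
relation of Figure 2, given by `partnerIdx` with `e = ⌈a - l/4⌉`. -/
def relT (l a : ℕ) : Sym2 (Glued l a) → Sym2 (Glued l a) → Prop := fun x y =>
  (∃ k : ZMod l, x = mid l a false k ∧ y = mid l a false (k + ((l / 2 : ℕ) : ZMod l))) ∨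
  (∃ k : ZMod l, x = mid l a true k ∧ y = mid l a true (partnerIdx a ((4 * a - l + 3) / 4) 0 k))

/-- The distance between two edge midpoints in a graph: `0` if they coincide and
otherwise `1` (the two half-edges) plus the least distance between endpoints. -/
def midDist {V : Type*} (G : SimpleGraph V) (x y : Sym2 V) : ℝ :=
  if x = y then 0
  else 1 + sInf {r : ℝ | ∃ u v, u ∈ x ∧ v ∈ y ∧ r = G.dist u v}

-- ## basic helpers

lemma mod2l {x l : ℕ} (h0 : 0 < l) (h : x < 2 * l) :
    x % l = if x < l then x else x - l := by
  split
  · exact Nat.mod_eq_of_lt ‹_›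
  · rw [Nat.mod_eq_sub_mod (by omega), Nat.mod_eq_of_lt (by omega)]

lemma cast_mod (l x : ℕ) : ((x % l : ℕ) : ZMod l) = (x : ZMod l) := by
  conv_rhs => rw [← Nat.div_add_mod x l]
  push_cast
  simp [ZMod.natCast_self]

lemma gv_eq_iff (l a : ℕ) (b b' : Bool) (k k' : ZMod l) :
    gv l a b k = gv l a b' k' ↔ k = k' ∧ (b = b' ∨ k.val ≤ a) := by
  constructor
  · intro h
    have h2 := Quotient.exact h
    rcases h2 with h2 | ⟨h2, h3⟩
    · cases h2; exact ⟨rfl, Or.inl rfl⟩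
    · exact ⟨h2, Or.inr h3⟩
  · rintro ⟨rfl, h | h⟩
    · cases h; rfl
    · exact Quotient.sound (Or.inr ⟨rfl, h⟩)

lemma adj_iff (l a : ℕ) {u v : Glued l a} : (Tgraph l a).Adj u v ↔
    u ≠ v ∧ ∃ b k, (u = gv l a b k ∧ v = gv l a b (k + 1)) ∨
      (u = gv l a b (k + 1) ∧ v = gv l a b k) := by
  unfold Tgraph
  rw [SimpleGraph.fromEdgeSet_adj]
  constructor
  · rintro ⟨hm, hne⟩
    obtain ⟨b, k, hk⟩ := hm
    rw [Sym2.eq_iff] at hk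
    exact ⟨hne, b, k, by tauto⟩
  · rintro ⟨hne, b, k, h⟩
    refine ⟨⟨b, k, ?_⟩, hne⟩
    rw [Sym2.eq_iff]; tauto

-- ## connectivity and walks

lemma adj_step (l a : ℕ) (hl2 : 2 ≤ l) (b : Bool) (k : ZMod l) :
    (Tgraph l a).Adj (gv l a b k) (gv l a b (k + 1)) := by
  haveI : NeZero l := ⟨by omega⟩
  haveI : Fact (1 < l) := ⟨by omega⟩
  rw [adj_iff]
  refine ⟨?_, b, k, Or.inl ⟨rfl, rfl⟩⟩
  intro h
  rw [gv_eq_iff] at h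
  have h1 : (0 : ZMod l) = 1 := by
    have hk := h.1
    have : k + 0 = k + 1 := by simpa using hk
    exact add_left_cancel this
  have := congrArg ZMod.val h1
  rw [ZMod.val_zero, ZMod.val_one l] at this
  omega

lemma reach_all (l a : ℕ) (hl2 : 2 ≤ l) (u v : Glued l a) :
    (Tgraph l a).Reachable u v := by
  haveI : NeZero l := ⟨by omega⟩
  have key : ∀ (b : Bool) (n : ℕ),
      (Tgraph l a).Reachable (gv l a b 0) (gv l a b (n : ZMod l)) := by
    intro b n
    induction n with
    | zero => rw [Nat.cast_zero]
    | succ n ih =>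
      refine ih.trans (SimpleGraph.Adj.reachable ?_)
      have : ((n + 1 : ℕ) : ZMod l) = (n : ZMod l) + 1 := by push_cast; ring
      rw [this]
      exact adj_step l a hl2 b _
  have base : ∀ (b : Bool) (k : ZMod l), (Tgraph l a).Reachable (gv l a false 0) (gv l a b k) := by
    intro b k
    have h0 : gv l a false 0 = gv l a b 0 := by
      rw [gv_eq_iff]; exact ⟨rfl, Or.inr (by simp)⟩
    rw [h0]
    have := key b k.val
    rwa [ZMod.natCast_zmod_val] at this
  induction u using Quotient.ind with
  | _ p =>
    induction v using Quotient.ind with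
    | _ q =>
      exact (base p.1 p.2).symm.trans (base q.1 q.2)

lemma lip_walk (l a : ℕ) (f : Glued l a → ℕ)
    (hf : ∀ b k, f (gv l a b k) ≤ f (gv l a b (k + 1)) + 1 ∧
      f (gv l a b (k + 1)) ≤ f (gv l a b k) + 1) :
    ∀ {u v : Glued l a} (w : (Tgraph l a).Walk u v),
      f u ≤ f v + w.length ∧ f v ≤ f u + w.length := by
  intro u v w
  induction w with
  | nil => simp
  | @cons u u' v h p ih =>
    obtain ⟨-, b, k, hk⟩ := (adj_iff l a).1 h
    have step : f u ≤ f u' + 1 ∧ f u' ≤ f u + 1 := by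
      rcases hk with ⟨rfl, rfl⟩ | ⟨rfl, rfl⟩
      · exact hf b k
      · exact (hf b k).symm
    simp only [SimpleGraph.Walk.length_cons]
    omega

lemma dist_bound (l a : ℕ) (hl2 : 2 ≤ l) (f : Glued l a → ℕ)
    (hf : ∀ b k, f (gv l a b k) ≤ f (gv l a b (k + 1)) + 1 ∧
      f (gv l a b (k + 1)) ≤ f (gv l a b k) + 1) (u v : Glued l a) :
    f u ≤ f v + (Tgraph l a).dist u v := by
  obtain ⟨w, hw⟩ := (reach_all l a hl2 u v).exists_walk_length_eq_dist
  have := lip_walk l a f hf w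
  omega



-- ## the cyclic norm

def nrm (l : ℕ) (x : ZMod l) : ℕ := min x.val (-x).val

lemma nrm_neg (l : ℕ) (x : ZMod l) : nrm l (-x) = nrm l x := by
  unfold nrm; rw [neg_neg, min_comm]

lemma nrm_zero (l : ℕ) : nrm l (0 : ZMod l) = 0 := by
  simp [nrm]

lemma val_sub_of_le (l : ℕ) (hl : 2 ≤ l) {x y : ZMod l} (h : y.val ≤ x.val) :
    (x - y).val = x.val - y.val := by
  haveI : NeZero l := ⟨by omega⟩
  have hx : (x.val : ZMod l) = x := ZMod.natCast_zmod_val x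
  have hy : (y.val : ZMod l) = y := ZMod.natCast_zmod_val y
  have : x - y = ((x.val - y.val : ℕ) : ZMod l) := by
    rw [Nat.cast_sub h, hx, hy]
  rw [this, ZMod.val_cast_of_lt]
  have := ZMod.val_lt x
  omega

lemma nrm_add_le (l : ℕ) (hl : 2 ≤ l) (x y : ZMod l) :
    nrm l (x + y) ≤ nrm l x + nrm l y := by
  haveI : NeZero l := ⟨by omega⟩
  have key2 : ∀ u w : ZMod l, nrm l (u + w) ≤ u.val + w.val := by
    intro u w
    calc nrm l (u + w) ≤ (u + w).val := min_le_left _ _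
      _ = (u.val + w.val) % l := ZMod.val_add u w
      _ ≤ u.val + w.val := Nat.mod_le _ _
  have key : ∀ u w : ZMod l, nrm l (u - w) ≤ u.val + w.val := by
    intro u w
    rcases le_total w.val u.val with h | h
    · calc nrm l (u - w) ≤ (u - w).val := min_le_left _ _
        _ = u.val - w.val := val_sub_of_le l hl h
        _ ≤ u.val + w.val := by omega
    · calc nrm l (u - w) ≤ (-(u - w)).val := min_le_right _ _
        _ = (w - u).val := by rw [neg_sub]
        _ = w.val - u.val := val_sub_of_le l hl h
        _ ≤ u.val + w.val := by omega
  unfold nrm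
  rcases le_total x.val (-x).val with hx | hx <;> rcases le_total y.val (-y).val with hy | hy
  · rw [min_eq_left hx, min_eq_left hy]; exact key2 x y
  · rw [min_eq_left hx, min_eq_right hy]
    have := key x (-y); rwa [sub_neg_eq_add] at this
  · rw [min_eq_right hx, min_eq_left hy]
    have := key y (-x); rw [sub_neg_eq_add, add_comm y x] at this
    unfold nrm at this; omega
  · rw [min_eq_right hx, min_eq_right hy]
    have := key2 (-x) (-y)
    rwa [← neg_add, nrm_neg] at this

lemma nrm_one_le (l : ℕ) (hl : 2 ≤ l) : nrm l (1 : ZMod l) ≤ 1 := by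
  haveI : Fact (1 < l) := ⟨by omega⟩
  calc nrm l 1 ≤ (1 : ZMod l).val := min_le_left _ _
    _ = 1 := ZMod.val_one l

lemma nrm_lip (l : ℕ) (hl : 2 ≤ l) (x q : ZMod l) :
    nrm l (x - q) ≤ nrm l (x + 1 - q) + 1 ∧ nrm l (x + 1 - q) ≤ nrm l (x - q) + 1 := by
  constructor
  · have h1 := nrm_add_le l hl (x + 1 - q) (-1)
    have h2 : (x + 1 - q) + (-1) = x - q := by ring
    rw [h2] at h1
    have h3 : nrm l (-1 : ZMod l) ≤ 1 := by rw [nrm_neg]; exact nrm_one_le l hl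
    omega
  · have h1 := nrm_add_le l hl (x - q) 1
    have h2 : (x - q) + 1 = x + 1 - q := by ring
    rw [h2] at h1
    have := nrm_one_le l hl
    omega

lemma nrm_coe (l : ℕ) (hl : 2 ≤ l) (d : ℕ) (hd : d < l) :
    nrm l (d : ZMod l) = min d (l - d) := by
  haveI : NeZero l := ⟨by omega⟩
  unfold nrm
  rw [ZMod.val_cast_of_lt hd, ZMod.neg_val]
  split
  · rename_i h
    have : d = 0 := by
      have := congrArg ZMod.val h
      rwa [ZMod.val_cast_of_lt hd, ZMod.val_zero] at this
    omega
  · rw [ZMod.val_cast_of_lt hd]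

lemma sub_coe (l : ℕ) (p q d : ℕ) (h : p = q + d) :
    ((p : ZMod l) - (q : ZMod l)) = (d : ZMod l) := by
  subst h; push_cast; ring

-- ## distance lower bound via the cyclic potential

lemma dist_ge_nrm (l a : ℕ) (hl2 : 2 ≤ l) (b b' : Bool) (k k' : ZMod l) :
    nrm l (k - k') ≤ (Tgraph l a).dist (gv l a b k) (gv l a b' k') := by
  set f : Glued l a → ℕ := Quotient.lift (fun p : Bool × ZMod l => nrm l (p.2 - k')) (by
    rintro ⟨c, m⟩ ⟨c', m'⟩ (h | ⟨h, -⟩)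
    · cases h; rfl
    · simp only at h; rw [h]) with hfdef
  have hf : ∀ c m, f (gv l a c m) ≤ f (gv l a c (m + 1)) + 1 ∧
      f (gv l a c (m + 1)) ≤ f (gv l a c m) + 1 := by
    intro c m
    show nrm l (m - k') ≤ nrm l (m + 1 - k') + 1 ∧ nrm l (m + 1 - k') ≤ nrm l (m - k') + 1
    exact nrm_lip l hl2 m k'
  have := dist_bound l a hl2 f hf (gv l a b k) (gv l a b' k')
  have h1 : f (gv l a b k) = nrm l (k - k') := rfl
  have h2 : f (gv l a b' k') = 0 := by
    show nrm l (k' - k') = 0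
    rw [sub_self, nrm_zero]
  omega

lemma dist_ge_min (l a : ℕ) (hl2 : 2 ≤ l) (b b' : Bool) (p q d : ℕ)
    (hpq : p = q + d ∨ q = p + d) (hd : d < l) :
    min d (l - d) ≤ (Tgraph l a).dist (gv l a b (p : ZMod l)) (gv l a b' (q : ZMod l)) := by
  have H := dist_ge_nrm l a hl2 b b' (p : ZMod l) (q : ZMod l)
  rcases hpq with h | h
  · rwa [sub_coe l p q d h, nrm_coe l hl2 d hd] at H
  · have : ((p : ZMod l) - q) = -((q : ZMod l) - p) := by ring
    rw [this, nrm_neg, sub_coe l q p d h, nrm_coe l hl2 d hd] at H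
    exact H

-- ## the theta-graph potential

lemma dist_ge_psi (l a : ℕ) (hl' : l % 2 = 0) (h1 : l < 4 * a) (h2 : 2 * a < l)
    (p s : ℕ) (hp1 : a < p) (hp2 : p < l) (hs : s ≤ a) :
    min (p - a + (l / 2 + s - a)) (l - p + (l / 2 - s)) ≤
      (Tgraph l a).dist (gv l a false (p : ZMod l)) (gv l a true ((l / 2 + s : ℕ) : ZMod l)) := by
  have hl2 : 2 ≤ l := by omega
  haveI : NeZero l := ⟨by omega⟩
  haveI : Fact (1 < l) := ⟨by omega⟩
  set q : ZMod l := ((l / 2 + s : ℕ) : ZMod l) with hq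
  have hqval : q.val = l / 2 + s := ZMod.val_cast_of_lt (by omega)
  set A : ℕ := l / 2 + s - a with hA
  set Y : ℕ := l / 2 - s with hY
  set g : Bool × ZMod l → ℕ := fun r =>
    if r.1 = true ∨ r.2.val ≤ a then nrm l (r.2 - q)
    else min (r.2.val - a + A) (l - r.2.val + Y) with hg
  have hresp : ∀ r r' : Bool × ZMod l, (gluedSetoid l a).r r r' → g r = g r' := by
    rintro ⟨c, m⟩ ⟨c', m'⟩ (h | ⟨h, h2'⟩)
    · cases h; rfl
    · simp only at h h2'
      subst h
      rw [hg]
      simp only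
      rw [if_pos (Or.inr h2'), if_pos (Or.inr h2')]
  set f : Glued l a → ℕ := Quotient.lift g hresp with hf
  have hgv : ∀ c m, f (gv l a c m) = g (c, m) := fun _ _ => rfl
  -- key evaluation lemmas
  have hnega : nrm l ((a : ZMod l) - q) = A := by
    have h1' : ((a : ZMod l) - q) = -(q - (a : ZMod l)) := by ring
    rw [h1', nrm_neg, hq, sub_coe l (l / 2 + s) a (l / 2 + s - a) (by omega),
      nrm_coe l hl2 _ (by omega)]
    omega
  have hneg0 : nrm l ((0 : ZMod l) - q) = Y := by
    have h1' : ((0 : ZMod l) - q) = -q := by ring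
    rw [h1', nrm_neg, hq, nrm_coe l hl2 _ (by omega)]
    omega
  have hlip : ∀ c m, f (gv l a c m) ≤ f (gv l a c (m + 1)) + 1 ∧
      f (gv l a c (m + 1)) ≤ f (gv l a c m) + 1 := by
    intro c m
    rw [hgv, hgv]
    cases c with
    | true =>
      simp only [hg, true_or, if_true]
      exact nrm_lip l hl2 m q
    | false =>
      set n := m.val with hn
      have hm : m = (n : ZMod l) := (ZMod.natCast_zmod_val m).symm
      have hnl : n < l := ZMod.val_lt m
      have hm1val : (m + 1).val = (n + 1) % l := by
        rw [ZMod.val_add, ZMod.val_one l, hn]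
      rcases Nat.lt_or_ge (n + 1) l with hcase | hcase
      · have hv1 : (m + 1).val = n + 1 := by rw [hm1val, Nat.mod_eq_of_lt hcase]
        rcases Nat.lt_or_ge n a with hna | hna
        · -- both in the shared/nrm branch
          simp only [hg]
          rw [if_pos (Or.inr (by omega)), if_pos (Or.inr (by rw [hv1]; omega))]
          exact nrm_lip l hl2 m q
        · rcases Nat.eq_or_lt_of_le hna with hna' | hna'
          · -- n = a : boundary
            simp only [hg]
            rw [if_pos (Or.inr (by omega)), if_neg (by push_neg; exact ⟨by simp, by rw [hv1]; omega⟩)]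
            have hval : nrm l (m - q) = A := by
              rw [hm, ← hna']; exact hnega
            rw [hval, hv1]
            omega
          · -- a < n, a < n+1 : both in the min branch
            simp only [hg]
            rw [if_neg (by push_neg; exact ⟨by simp, by omega⟩),
              if_neg (by push_neg; exact ⟨by simp, by rw [hv1]; omega⟩)]
            rw [hv1]
            omega
      · -- n = l - 1 : wrap-around edge
        have hnl1 : n = l - 1 := by omega
        have hm10 : m + 1 = 0 := by
          rw [hm]
          have : ((n : ℕ) : ZMod l) + 1 = ((n + 1 : ℕ) : ZMod l) := by push_cast; ring
          rw [this]
          have : n + 1 = l := by omega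
          rw [this, ZMod.natCast_self]
        simp only [hg]
        rw [if_neg (by push_neg; exact ⟨by simp, by omega⟩), if_pos (Or.inr (by rw [hm10]; simp))]
        rw [hm10, hneg0]
        omega
  have hdb := dist_bound l a hl2 f hlip (gv l a false (p : ZMod l)) (gv l a true q)
  have hfp : f (gv l a false (p : ZMod l)) = min (p - a + A) (l - p + Y) := by
    simp only [hgv, hg]
    rw [if_neg (by push_neg; exact ⟨by simp, by rw [ZMod.val_cast_of_lt hp2]; omega⟩)]
    rw [ZMod.val_cast_of_lt hp2]
  have hfq : f (gv l a true q) = 0 := by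
    simp only [hgv, hg, true_or, if_true]
    rw [sub_self, nrm_zero]
  omega

-- ## val helpers

lemma val_succ (l : ℕ) (hl2 : 2 ≤ l) (k : ZMod l) (h : k.val + 1 < l) :
    (k + 1).val = k.val + 1 := by
  haveI : NeZero l := ⟨by omega⟩
  haveI : Fact (1 < l) := ⟨by omega⟩
  rw [ZMod.val_add, ZMod.val_one l, Nat.mod_eq_of_lt h]

lemma two_ne_zero' (l : ℕ) (hl3 : 3 ≤ l) : (2 : ZMod l) ≠ 0 := by
  haveI : NeZero l := ⟨by omega⟩
  intro h
  have h2 : ((2 : ℕ) : ZMod l) = 0 := by push_cast; exact h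
  have := congrArg ZMod.val h2
  rw [ZMod.val_cast_of_lt (by omega), ZMod.val_zero] at this
  omega

-- ## mid equality

lemma mid_eq_iff (l a : ℕ) (hl3 : 3 ≤ l) (b b' : Bool) (k k' : ZMod l) :
    mid l a b k = mid l a b' k' ↔
      k = k' ∧ (b = b' ∨ (k.val ≤ a ∧ (k + 1).val ≤ a)) := by
  unfold mid
  rw [Sym2.eq_iff]
  constructor
  · rintro (⟨h1, h2⟩ | ⟨h1, h2⟩)
    · rw [gv_eq_iff] at h1 h2
      obtain ⟨rfl, hb1⟩ := h1
      obtain ⟨-, hb2⟩ := h2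
      refine ⟨rfl, ?_⟩
      rcases hb1 with h | h
      · exact Or.inl h
      rcases hb2 with h' | h'
      · exact Or.inl h'
      · exact Or.inr ⟨h, h'⟩
    · rw [gv_eq_iff] at h1 h2
      have e1 : k = k' + 1 := h1.1
      have e2 : k + 1 = k' := h2.1
      exfalso
      apply two_ne_zero' l hl3
      have : k = k + 2 := by
        conv_lhs => rw [e1, ← e2]
        ring
      have := left_eq_add.mp this
      exact this
  · rintro ⟨rfl, h | h⟩
    · subst h
      exact Or.inl ⟨rfl, rfl⟩
    · exact Or.inl ⟨(gv_eq_iff l a b b' k k).2 ⟨rfl, Or.inr h.1⟩,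
        (gv_eq_iff l a b b' (k + 1) (k + 1)).2 ⟨rfl, Or.inr h.2⟩⟩

lemma mid_inj (l a : ℕ) (hl3 : 3 ≤ l) (b : Bool) (k k' : ZMod l)
    (h : mid l a b k = mid l a b k') : k = k' :=
  ((mid_eq_iff l a hl3 b b k k').1 h).1

lemma mid_shared (l a : ℕ) (hl3 : 3 ≤ l) (ha : a + 1 < l) (k : ZMod l) (h : k.val < a) :
    mid l a true k = mid l a false k := by
  rw [mid_eq_iff l a hl3]
  refine ⟨rfl, Or.inr ⟨by omega, ?_⟩⟩
  rw [val_succ l (by omega) k (by omega)]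
  omega

lemma mid_cross (l a : ℕ) (hl3 : 3 ≤ l) (ha : a + 1 < l) (b b' : Bool) (k k' : ZMod l)
    (h : mid l a b k = mid l a b' k') (hbb : b ≠ b') : k = k' ∧ k.val < a := by
  rw [mid_eq_iff l a hl3] at h
  obtain ⟨rfl, h2 | h2⟩ := h
  · exact absurd h2 hbb
  · refine ⟨rfl, ?_⟩
    have hs := val_succ l (by omega) k (by omega)
    omega

-- ## partnerIdx evaluation

lemma pIdx_eval (l a e : ℕ) (hl2 : 2 ≤ l) (j : ℕ) (hj : j < l) :
    partnerIdx a e 0 ((j : ZMod l)) =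
      if j < e then ((e - 1 - j + l / 2 : ℕ) : ZMod l)
      else if a - e ≤ j ∧ j < a then ((2 * a - e - 1 - j + l / 2 : ℕ) : ZMod l)
      else if (j + l / 2) % l < e then ((e - 1 - (j + l / 2) % l : ℕ) : ZMod l)
      else if a - e ≤ (j + l / 2) % l ∧ (j + l / 2) % l < a then
        ((2 * a - e - 1 - (j + l / 2) % l : ℕ) : ZMod l)
      else ((j + l / 2 : ℕ) : ZMod l) := by
  haveI : NeZero l := ⟨by omega⟩
  have hcast : ((j : ZMod l) + ((l / 2 : ℕ) : ZMod l)) = ((j + l / 2 : ℕ) : ZMod l) := by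
    push_cast; ring
  simp only [partnerIdx, sub_zero, zero_add, ZMod.val_cast_of_lt hj, hcast, ZMod.val_natCast]
  congr 1 <;> [skip; congr 1] <;> push_cast <;> ring_nf

-- ## partnerIdx branch lemmas

def pP (l a : ℕ) (k : ZMod l) : ZMod l := partnerIdx a ((4 * a - l + 3) / 4) 0 k

lemma pP_lt (l a : ℕ) (hl' : l % 2 = 0) (h1 : l < 4 * a) (h2 : 2 * a < l)
    (j : ℕ) (hj : j < a) :
    ∃ σ : ℕ, pP l a ((j : ℕ) : ZMod l) = ((σ + l / 2 : ℕ) : ZMod l) ∧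
      (pP l a ((j : ℕ) : ZMod l)).val = σ + l / 2 ∧ σ < a ∧
      ((j < (4 * a - l + 3) / 4 ∧ σ = (4 * a - l + 3) / 4 - 1 - j) ∨
       ((4 * a - l + 3) / 4 ≤ j ∧ a - (4 * a - l + 3) / 4 ≤ j ∧
         σ = 2 * a - (4 * a - l + 3) / 4 - 1 - j) ∨
       ((4 * a - l + 3) / 4 ≤ j ∧ j < a - (4 * a - l + 3) / 4 ∧ σ = j)) := by
  haveI : NeZero l := ⟨by omega⟩
  set e := (4 * a - l + 3) / 4 with he
  have hbasic : 1 ≤ e ∧ 2 * e ≤ a ∧ a < l / 2 ∧ 4 ≤ l := by omega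
  unfold pP
  rw [← he, pIdx_eval l a e (by omega) j (by omega)]
  rcases Nat.lt_or_ge j e with hje | hje
  · refine ⟨e - 1 - j, ?_⟩
    rw [if_pos hje]
    exact ⟨rfl, ZMod.val_cast_of_lt (by omega), by omega, Or.inl ⟨hje, rfl⟩⟩
  · rw [if_neg (by omega)]
    rcases Nat.lt_or_ge j (a - e) with hae | hae
    · rw [if_neg (by omega)]
      have hi : (j + l / 2) % l = j + l / 2 := Nat.mod_eq_of_lt (by omega)
      rw [hi, if_neg (by omega), if_neg (by omega)]
      exact ⟨j, rfl, ZMod.val_cast_of_lt (by omega), by omega, Or.inr (Or.inr ⟨hje, hae, rfl⟩)⟩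
    · rw [if_pos ⟨by omega, hj⟩]
      refine ⟨2 * a - e - 1 - j, rfl, ZMod.val_cast_of_lt (by omega), by omega,
        Or.inr (Or.inl ⟨hje, by omega, rfl⟩)⟩

lemma pP_invol_lt (l a : ℕ) (hl' : l % 2 = 0) (h1 : l < 4 * a) (h2 : 2 * a < l)
    (j : ℕ) (hj : j < a) :
    pP l a (pP l a ((j : ℕ) : ZMod l)) = ((j : ℕ) : ZMod l) := by
  haveI : NeZero l := ⟨by omega⟩
  set e := (4 * a - l + 3) / 4 with he
  have hbasic : 1 ≤ e ∧ 2 * e ≤ a ∧ a < l / 2 ∧ 4 ≤ l := by omega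
  obtain ⟨σ, hv, hval, hσ, hbr⟩ := pP_lt l a hl' h1 h2 j hj
  rw [hv]
  unfold pP
  rw [← he, pIdx_eval l a e (by omega) (σ + l / 2) (by omega)]
  rw [if_neg (by omega), if_neg (by omega)]
  have hi : (σ + l / 2 + l / 2) % l = σ := by
    have : σ + l / 2 + l / 2 = σ + l := by omega
    rw [this, Nat.add_mod_right, Nat.mod_eq_of_lt (by omega)]
  rw [hi]
  rcases hbr with ⟨hje, hσe⟩ | ⟨hje, hae, hσe⟩ | ⟨hje, hae, hσe⟩
  · rw [if_pos (by omega)]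
    congr 1
    omega
  · rw [if_neg (by omega), if_pos ⟨by omega, by omega⟩]
    congr 1
    omega
  · rw [if_neg (by omega), if_neg (by omega)]
    have : σ + l / 2 + l / 2 = j + l := by omega
    rw [this]
    push_cast
    simp [ZMod.natCast_self]

lemma pP_free (l a : ℕ) (hl' : l % 2 = 0) (h1 : l < 4 * a) (h2 : 2 * a < l)
    (j : ℕ) (haj : a ≤ j) (hjl : j < l) :
    pP l a (pP l a ((j : ℕ) : ZMod l)) = ((j : ℕ) : ZMod l) ∧
      ((pP l a ((j : ℕ) : ZMod l)).val < a ∨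
        (pP l a ((j : ℕ) : ZMod l) = ((j + l / 2 : ℕ) : ZMod l) ∧
          a ≤ (pP l a ((j : ℕ) : ZMod l)).val)) := by
  haveI : NeZero l := ⟨by omega⟩
  set e := (4 * a - l + 3) / 4 with he
  have hbasic : 1 ≤ e ∧ 2 * e ≤ a ∧ a < l / 2 ∧ 4 ≤ l := by omega
  have hP1 : pP l a ((j : ℕ) : ZMod l) =
      (if (j + l / 2) % l < e then ((e - 1 - (j + l / 2) % l : ℕ) : ZMod l)
       else if a - e ≤ (j + l / 2) % l ∧ (j + l / 2) % l < a then
         ((2 * a - e - 1 - (j + l / 2) % l : ℕ) : ZMod l)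
       else ((j + l / 2 : ℕ) : ZMod l)) := by
    unfold pP
    rw [← he, pIdx_eval l a e (by omega) j (by omega), if_neg (by omega), if_neg (by omega)]
  set i := (j + l / 2) % l with hi
  have hi2 : i = if j + l / 2 < l then j + l / 2 else j + l / 2 - l := by
    rw [hi, mod2l (by omega) (by omega)]
  have hiback : (i + l / 2) % l = j := by
    split at hi2 <;>
    · rw [hi2]
      rw [mod2l (by omega) (by omega)]
      split <;> omega
  have hil : i < l := by split at hi2 <;> omega
  rcases Nat.lt_or_ge i e with hie | hie
  · -- reflected into the interior of α₊
    have hPv : pP l a ((j : ℕ) : ZMod l) = ((e - 1 - i : ℕ) : ZMod l) := by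
      rw [hP1, if_pos hie]
    have hval : (pP l a ((j : ℕ) : ZMod l)).val = e - 1 - i :=
      hPv ▸ ZMod.val_cast_of_lt (by omega)
    constructor
    · rw [hPv]
      unfold pP
      rw [← he, pIdx_eval l a e (by omega) (e - 1 - i) (by omega), if_pos (by omega)]
      have h3 : e - 1 - (e - 1 - i) + l / 2 = i + l / 2 := by omega
      rw [h3, ← hiback, cast_mod]
    · left; omega
  · rcases Nat.lt_or_ge i a with hia | hia
    · rcases Nat.lt_or_ge i (a - e) with hiae | hiae
      · -- antipode lands in the middle of A: plain antipodal
        have hPv : pP l a ((j : ℕ) : ZMod l) = ((j + l / 2 : ℕ) : ZMod l) := by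
          rw [hP1, if_neg (by omega), if_neg (by omega)]
        have hval : (pP l a ((j : ℕ) : ZMod l)).val = i := by
          rw [hPv, ZMod.val_natCast, ← hi]
        constructor
        · rw [hPv]
          have hci : ((j + l / 2 : ℕ) : ZMod l) = ((i : ℕ) : ZMod l) := by
            rw [hi, cast_mod]
          rw [hci]
          unfold pP
          rw [← he, pIdx_eval l a e (by omega) i hil, if_neg (by omega),
            if_neg (by omega), hiback, if_neg (by omega), if_neg (by omega),
            ← hiback, cast_mod]
        · left; omega
      · -- reflected into the interior of α₋
        have hPv : pP l a ((j : ℕ) : ZMod l) = ((2 * a - e - 1 - i : ℕ) : ZMod l) := by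
          rw [hP1, if_neg (by omega), if_pos ⟨by omega, by omega⟩]
        have hval : (pP l a ((j : ℕ) : ZMod l)).val = 2 * a - e - 1 - i :=
          hPv ▸ ZMod.val_cast_of_lt (by omega)
        constructor
        · rw [hPv]
          unfold pP
          rw [← he, pIdx_eval l a e (by omega) (2 * a - e - 1 - i) (by omega),
            if_neg (by omega), if_pos ⟨by omega, by omega⟩]
          have h3 : 2 * a - e - 1 - (2 * a - e - 1 - i) + l / 2 = i + l / 2 := by omega
          rw [h3, ← hiback, cast_mod]
        · left; omega
    · -- plain antipodal, both free
      have hPv : pP l a ((j : ℕ) : ZMod l) = ((j + l / 2 : ℕ) : ZMod l) := by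
        rw [hP1, if_neg (by omega), if_neg (by omega)]
      have hval : (pP l a ((j : ℕ) : ZMod l)).val = i := by
        rw [hPv, ZMod.val_natCast, ← hi]
      constructor
      · rw [hPv]
        have hci : ((j + l / 2 : ℕ) : ZMod l) = ((i : ℕ) : ZMod l) := by
          rw [hi, cast_mod]
        rw [hci]
        unfold pP
        rw [← he, pIdx_eval l a e (by omega) i hil, if_neg (by omega),
          if_neg (by omega), hiback, if_neg (by omega), if_neg (by omega),
          ← hiback, cast_mod]
      · right
        exact ⟨hPv, by omega⟩

-- ## the explicit wall relation

def InS3 (l a : ℕ) (m : ZMod l) (x : Sym2 (Glued l a)) : Prop :=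
  x = mid l a false m ∨ x = mid l a false (m + ((l / 2 : ℕ) : ZMod l)) ∨
    x = mid l a true (pP l a m)

def Rrel (l a : ℕ) (x y : Sym2 (Glued l a)) : Prop :=
  x = y ∨
  (∃ m : ZMod l, m.val < a ∧ InS3 l a m x ∧ InS3 l a m y) ∨
  (∃ t : ZMod l, a ≤ t.val ∧ a ≤ (t + ((l / 2 : ℕ) : ZMod l)).val ∧
     (x = mid l a false t ∨ x = mid l a false (t + ((l / 2 : ℕ) : ZMod l))) ∧
     (y = mid l a false t ∨ y = mid l a false (t + ((l / 2 : ℕ) : ZMod l)))) ∨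
  (∃ t : ZMod l, a ≤ t.val ∧ a ≤ (pP l a t).val ∧
     (x = mid l a true t ∨ x = mid l a true (pP l a t)) ∧
     (y = mid l a true t ∨ y = mid l a true (pP l a t)))

lemma hh_add_self (l : ℕ) (hl' : l % 2 = 0) (hl2 : 2 ≤ l) :
    (((l / 2 : ℕ) : ZMod l)) + ((l / 2 : ℕ) : ZMod l) = 0 := by
  have h0 : ((l / 2 : ℕ) : ZMod l) + ((l / 2 : ℕ) : ZMod l) = ((l / 2 + l / 2 : ℕ) : ZMod l) := by
    push_cast; ring
  rw [h0]
  have h3 : l / 2 + l / 2 = l := by omega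
  rw [h3, ZMod.natCast_self]

lemma val_add_half (l : ℕ) (hl2 : 2 ≤ l) {m : ZMod l} (hm : m.val < l / 2) :
    (m + ((l / 2 : ℕ) : ZMod l)).val = m.val + l / 2 := by
  haveI : NeZero l := ⟨by omega⟩
  have hcast : m + ((l / 2 : ℕ) : ZMod l) = ((m.val + l / 2 : ℕ) : ZMod l) := by
    rw [Nat.cast_add, ZMod.natCast_zmod_val]
  rw [hcast, ZMod.val_cast_of_lt (by omega)]

lemma pP_invol_lt' (l a : ℕ) (hl' : l % 2 = 0) (h1 : l < 4 * a) (h2 : 2 * a < l)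
    {m : ZMod l} (hm : m.val < a) : pP l a (pP l a m) = m := by
  haveI : NeZero l := ⟨by omega⟩
  have hres := pP_invol_lt l a hl' h1 h2 m.val hm
  rwa [ZMod.natCast_zmod_val] at hres

lemma pP_val_big (l a : ℕ) (hl' : l % 2 = 0) (h1 : l < 4 * a) (h2 : 2 * a < l)
    {m : ZMod l} (hm : m.val < a) :
    l / 2 ≤ (pP l a m).val ∧ (pP l a m).val < l / 2 + a := by
  haveI : NeZero l := ⟨by omega⟩
  obtain ⟨σ, hv, hval, hσ, -⟩ := pP_lt l a hl' h1 h2 m.val hm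
  rw [ZMod.natCast_zmod_val] at hval
  omega

lemma pP_free' (l a : ℕ) (hl' : l % 2 = 0) (h1 : l < 4 * a) (h2 : 2 * a < l)
    {t : ZMod l} (ht : a ≤ t.val) :
    pP l a (pP l a t) = t ∧
      ((pP l a t).val < a ∨
        (pP l a t = t + ((l / 2 : ℕ) : ZMod l) ∧ a ≤ (pP l a t).val)) := by
  haveI : NeZero l := ⟨by omega⟩
  have hfree := pP_free l a hl' h1 h2 t.val ht (ZMod.val_lt t)
  have hc : ((t.val + l / 2 : ℕ) : ZMod l) = t + ((l / 2 : ℕ) : ZMod l) := by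
    rw [Nat.cast_add, ZMod.natCast_zmod_val]
  rw [ZMod.natCast_zmod_val, hc] at hfree
  exact hfree

-- relT is contained in Rrel

lemma relT_le_R (l a : ℕ) (hl' : l % 2 = 0) (h1 : l < 4 * a) (h2 : 2 * a < l)
    (x y : Sym2 (Glued l a)) (h : relT l a x y) : Rrel l a x y := by
  have hl3 : 3 ≤ l := by omega
  have ha1 : a + 1 < l := by omega
  have ha2 : a < l / 2 := by omega
  rcases h with ⟨k, hx, hy⟩ | ⟨k, hx, hy⟩
  · -- C case
    rcases Nat.lt_or_ge k.val a with hk | hk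
    · exact Or.inr (Or.inl ⟨k, hk, Or.inl hx, Or.inr (Or.inl hy)⟩)
    · rcases Nat.lt_or_ge (k + ((l / 2 : ℕ) : ZMod l)).val a with hk2 | hk2
      · refine Or.inr (Or.inl ⟨k + ((l / 2 : ℕ) : ZMod l), hk2, ?_, Or.inl hy⟩)
        right; left
        rw [hx]
        congr 1
        rw [add_assoc, hh_add_self l hl' (by omega), add_zero]
      · exact Or.inr (Or.inr (Or.inl ⟨k, hk, hk2, Or.inl hx, Or.inr hy⟩))
  · -- C' case
    have hyP : y = mid l a true (pP l a k) := hy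
    rcases Nat.lt_or_ge k.val a with hk | hk
    · refine Or.inr (Or.inl ⟨k, hk, ?_, Or.inr (Or.inr hyP)⟩)
      left
      rw [hx, mid_shared l a hl3 ha1 k hk]
    · obtain ⟨hinv, hcase⟩ := pP_free' l a hl' h1 h2 hk
      rcases Nat.lt_or_ge (pP l a k).val a with hk2 | hk2
      · refine Or.inr (Or.inl ⟨pP l a k, hk2, ?_, ?_⟩)
        · right; right
          rw [hx, hinv]
        · left
          rw [hyP, mid_shared l a hl3 ha1 _ hk2]
      · exact Or.inr (Or.inr (Or.inr ⟨k, hk, hk2, Or.inl hx, Or.inr hyP⟩))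

-- symmetry

lemma R_symm (l a : ℕ) (x y : Sym2 (Glued l a)) (h : Rrel l a x y) : Rrel l a y x := by
  rcases h with rfl | ⟨m, hm, hx, hy⟩ | ⟨t, h1t, h2t, hx, hy⟩ | ⟨t, h1t, h2t, hx, hy⟩
  · exact Or.inl rfl
  · exact Or.inr (Or.inl ⟨m, hm, hy, hx⟩)
  · exact Or.inr (Or.inr (Or.inl ⟨t, h1t, h2t, hy, hx⟩))
  · exact Or.inr (Or.inr (Or.inr ⟨t, h1t, h2t, hy, hx⟩))



-- ## classes are well separated

lemma S3_key (l a : ℕ) (hl' : l % 2 = 0) (h1 : l < 4 * a) (h2 : 2 * a < l)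
    {m m' : ZMod l} {y : Sym2 (Glued l a)} (hm : m.val < a) (hm' : m'.val < a)
    (hy : InS3 l a m y) (hy' : InS3 l a m' y) : m = m' := by
  have hl3 : 3 ≤ l := by omega
  have ha1 : a + 1 < l := by omega
  have ha2 : a < l / 2 := by omega
  have hv1 : (m + ((l / 2 : ℕ) : ZMod l)).val = m.val + l / 2 :=
    val_add_half l (by omega) (by omega)
  have hv1' : (m' + ((l / 2 : ℕ) : ZMod l)).val = m'.val + l / 2 :=
    val_add_half l (by omega) (by omega)
  have hp := pP_val_big l a hl' h1 h2 hm
  have hp' := pP_val_big l a hl' h1 h2 hm'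
  have hff : (false : Bool) ≠ true := by decide
  have htf : (true : Bool) ≠ false := by decide
  rcases hy with rfl | rfl | rfl <;> rcases hy' with h | h | h
  · exact mid_inj l a hl3 _ _ _ h
  · exfalso
    have := congrArg ZMod.val (mid_inj l a hl3 _ _ _ h)
    omega
  · exfalso
    obtain ⟨heq, hlt⟩ := mid_cross l a hl3 ha1 _ _ _ _ h hff
    have := congrArg ZMod.val heq
    omega
  · exfalso
    have := congrArg ZMod.val (mid_inj l a hl3 _ _ _ h)
    omega
  · exact add_right_cancel (mid_inj l a hl3 _ _ _ h)
  · exfalso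
    obtain ⟨heq, hlt⟩ := mid_cross l a hl3 ha1 _ _ _ _ h hff
    omega
  · exfalso
    obtain ⟨heq, hlt⟩ := mid_cross l a hl3 ha1 _ _ _ _ h htf
    omega
  · exfalso
    obtain ⟨heq, hlt⟩ := mid_cross l a hl3 ha1 _ _ _ _ h htf
    omega
  · have heq := mid_inj l a hl3 _ _ _ h
    have := congrArg (pP l a) heq
    rwa [pP_invol_lt' l a hl' h1 h2 hm, pP_invol_lt' l a hl' h1 h2 hm'] at this

lemma S3_S2C (l a : ℕ) (hl' : l % 2 = 0) (h1 : l < 4 * a) (h2 : 2 * a < l)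
    {m t : ZMod l} {y : Sym2 (Glued l a)} (hm : m.val < a)
    (h1t : a ≤ t.val) (h2t : a ≤ (t + ((l / 2 : ℕ) : ZMod l)).val)
    (hy : InS3 l a m y)
    (hy' : y = mid l a false t ∨ y = mid l a false (t + ((l / 2 : ℕ) : ZMod l))) : False := by
  have hl3 : 3 ≤ l := by omega
  have ha1 : a + 1 < l := by omega
  have ha2 : a < l / 2 := by omega
  have hv1 : (m + ((l / 2 : ℕ) : ZMod l)).val = m.val + l / 2 :=
    val_add_half l (by omega) (by omega)
  have hp := pP_val_big l a hl' h1 h2 hm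
  have htf : (true : Bool) ≠ false := by decide
  rcases hy with rfl | rfl | rfl <;> rcases hy' with h | h
  · have := congrArg ZMod.val (mid_inj l a hl3 _ _ _ h)
    omega
  · have := congrArg ZMod.val (mid_inj l a hl3 _ _ _ h)
    omega
  · have heq := mid_inj l a hl3 _ _ _ h
    have hback : t + ((l / 2 : ℕ) : ZMod l) = m := by
      rw [← heq, add_assoc, hh_add_self l hl' (by omega), add_zero]
    have := congrArg ZMod.val hback
    omega
  · have heq := add_right_cancel (mid_inj l a hl3 _ _ _ h)
    have := congrArg ZMod.val heq
    omega
  · obtain ⟨heq, hlt⟩ := mid_cross l a hl3 ha1 _ _ _ _ h htf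
    omega
  · obtain ⟨heq, hlt⟩ := mid_cross l a hl3 ha1 _ _ _ _ h htf
    omega

lemma S3_S2C' (l a : ℕ) (hl' : l % 2 = 0) (h1 : l < 4 * a) (h2 : 2 * a < l)
    {m t : ZMod l} {y : Sym2 (Glued l a)} (hm : m.val < a)
    (h1t : a ≤ t.val) (h2t : a ≤ (pP l a t).val)
    (hy : InS3 l a m y)
    (hy' : y = mid l a true t ∨ y = mid l a true (pP l a t)) : False := by
  have hl3 : 3 ≤ l := by omega
  have ha1 : a + 1 < l := by omega
  have ha2 : a < l / 2 := by omega
  have hv1 : (m + ((l / 2 : ℕ) : ZMod l)).val = m.val + l / 2 :=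
    val_add_half l (by omega) (by omega)
  have hp := pP_val_big l a hl' h1 h2 hm
  have hff : (false : Bool) ≠ true := by decide
  rcases hy with rfl | rfl | rfl <;> rcases hy' with h | h
  · obtain ⟨heq, hlt⟩ := mid_cross l a hl3 ha1 _ _ _ _ h hff
    have := congrArg ZMod.val heq
    omega
  · obtain ⟨heq, hlt⟩ := mid_cross l a hl3 ha1 _ _ _ _ h hff
    have := congrArg ZMod.val heq
    omega
  · obtain ⟨heq, hlt⟩ := mid_cross l a hl3 ha1 _ _ _ _ h hff
    omega
  · obtain ⟨heq, hlt⟩ := mid_cross l a hl3 ha1 _ _ _ _ h hff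
    omega
  · have heq := mid_inj l a hl3 _ _ _ h
    have hback := congrArg (pP l a) heq
    rw [pP_invol_lt' l a hl' h1 h2 hm] at hback
    have := congrArg ZMod.val hback
    omega
  · have heq := mid_inj l a hl3 _ _ _ h
    have hback := congrArg (pP l a) heq
    rw [pP_invol_lt' l a hl' h1 h2 hm, (pP_free' l a hl' h1 h2 h1t).1] at hback
    have := congrArg ZMod.val hback
    omega

lemma S2C_S2C' (l a : ℕ) (hl' : l % 2 = 0) (h1 : l < 4 * a) (h2 : 2 * a < l)
    {t t' : ZMod l} {y : Sym2 (Glued l a)}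
    (h1t : a ≤ t.val) (h2t : a ≤ (t + ((l / 2 : ℕ) : ZMod l)).val)
    (hy : y = mid l a false t ∨ y = mid l a false (t + ((l / 2 : ℕ) : ZMod l)))
    (hy' : y = mid l a true t' ∨ y = mid l a true (pP l a t')) : False := by
  have hl3 : 3 ≤ l := by omega
  have ha1 : a + 1 < l := by omega
  rcases hy with rfl | rfl <;> rcases hy' with h | h <;>
  · obtain ⟨heq, hlt⟩ := mid_cross l a hl3 ha1 _ _ _ _ h (by decide)
    omega

lemma S2C_key (l a : ℕ) (hl' : l % 2 = 0) (h1 : l < 4 * a) (h2 : 2 * a < l)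
    {t t' : ZMod l} {y : Sym2 (Glued l a)}
    (hy : y = mid l a false t ∨ y = mid l a false (t + ((l / 2 : ℕ) : ZMod l)))
    (hy' : y = mid l a false t' ∨ y = mid l a false (t' + ((l / 2 : ℕ) : ZMod l))) :
    t' = t ∨ t' = t + ((l / 2 : ℕ) : ZMod l) := by
  have hl3 : 3 ≤ l := by omega
  rcases hy with rfl | rfl <;> rcases hy' with h | h
  · exact Or.inl (mid_inj l a hl3 _ _ _ h).symm
  · have heq := mid_inj l a hl3 _ _ _ h
    right
    rw [heq, add_assoc, hh_add_self l hl' (by omega), add_zero]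
  · exact Or.inr (mid_inj l a hl3 _ _ _ h).symm
  · exact Or.inl (add_right_cancel (mid_inj l a hl3 _ _ _ h).symm)

lemma S2C'_key (l a : ℕ) (hl' : l % 2 = 0) (h1 : l < 4 * a) (h2 : 2 * a < l)
    {t t' : ZMod l} {y : Sym2 (Glued l a)}
    (h1t : a ≤ t.val) (h1t' : a ≤ t'.val)
    (hy : y = mid l a true t ∨ y = mid l a true (pP l a t))
    (hy' : y = mid l a true t' ∨ y = mid l a true (pP l a t')) :
    t' = t ∨ t' = pP l a t := by
  have hl3 : 3 ≤ l := by omega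
  rcases hy with rfl | rfl <;> rcases hy' with h | h
  · exact Or.inl (mid_inj l a hl3 _ _ _ h).symm
  · have heq := mid_inj l a hl3 _ _ _ h
    right
    rw [heq, (pP_free' l a hl' h1 h2 h1t').1]
  · exact Or.inr (mid_inj l a hl3 _ _ _ h).symm
  · have heq := mid_inj l a hl3 _ _ _ h
    have := congrArg (pP l a) heq
    rw [(pP_free' l a hl' h1 h2 h1t).1, (pP_free' l a hl' h1 h2 h1t').1] at this
    exact Or.inl this.symm

lemma R_trans (l a : ℕ) (hl' : l % 2 = 0) (h1 : l < 4 * a) (h2 : 2 * a < l)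
    (x y z : Sym2 (Glued l a)) (hxy : Rrel l a x y) (hyz : Rrel l a y z) :
    Rrel l a x z := by
  rcases hxy with rfl | hxy
  · exact hyz
  rcases hyz with rfl | hyz
  · exact Or.inr hxy
  rcases hxy with ⟨m, hm, hx, hy⟩ | ⟨t, h1t, h2t, hx, hy⟩ | ⟨t, h1t, h2t, hx, hy⟩
  · rcases hyz with ⟨m', hm', hy', hz⟩ | ⟨t', h1t', h2t', hy', hz⟩ | ⟨t', h1t', h2t', hy', hz⟩
    · have := S3_key l a hl' h1 h2 hm hm' hy hy'
      subst this
      exact Or.inr (Or.inl ⟨m, hm, hx, hz⟩)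
    · exact absurd (S3_S2C l a hl' h1 h2 hm h1t' h2t' hy hy') (by simp)
    · exact absurd (S3_S2C' l a hl' h1 h2 hm h1t' h2t' hy hy') (by simp)
  · rcases hyz with ⟨m', hm', hy', hz⟩ | ⟨t', h1t', h2t', hy', hz⟩ | ⟨t', h1t', h2t', hy', hz⟩
    · exact absurd (S3_S2C l a hl' h1 h2 hm' h1t h2t hy' hy) (by simp)
    · have hk := S2C_key l a hl' h1 h2 hy hy'
      refine Or.inr (Or.inr (Or.inl ⟨t, h1t, h2t, hx, ?_⟩))
      rcases hk with rfl | rfl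
      · exact hz
      · rcases hz with h | h
        · exact Or.inr h
        · left
          rwa [add_assoc, hh_add_self l hl' (by omega), add_zero] at h
    · exact absurd (S2C_S2C' l a hl' h1 h2 h1t h2t hy hy') (by simp)
  · rcases hyz with ⟨m', hm', hy', hz⟩ | ⟨t', h1t', h2t', hy', hz⟩ | ⟨t', h1t', h2t', hy', hz⟩
    · exact absurd (S3_S2C' l a hl' h1 h2 hm' h1t h2t hy' hy) (by simp)
    · exact absurd (S2C_S2C' l a hl' h1 h2 h1t' h2t' hy' hy) (by simp)
    · have hk := S2C'_key l a hl' h1 h2 h1t h1t' hy hy'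
      refine Or.inr (Or.inr (Or.inr ⟨t, h1t, h2t, hx, ?_⟩))
      rcases hk with rfl | rfl
      · exact hz
      · rcases hz with h | h
        · exact Or.inr h
        · left
          rwa [(pP_free' l a hl' h1 h2 h1t).1] at h

lemma eqvGen_le_R (l a : ℕ) (hl' : l % 2 = 0) (h1 : l < 4 * a) (h2 : 2 * a < l)
    (x y : Sym2 (Glued l a)) (h : Relation.EqvGen (relT l a) x y) : Rrel l a x y := by
  induction h with
  | rel u v huv => exact relT_le_R l a hl' h1 h2 u v huv
  | refl u => exact Or.inl rfl
  | symm u v _ ih => exact R_symm l a u v ih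
  | trans u v w _ _ ih1 ih2 => exact R_trans l a hl' h1 h2 u v w ih1 ih2

-- ## endpoint distance bounds

lemma EB_antip (l a : ℕ) (hl' : l % 2 = 0) (h1 : l < 4 * a) (h2 : 2 * a < l)
    (b b' : Bool) (j : ℕ) :
    ∀ δ ε : ℕ, δ ≤ 1 → ε ≤ 1 →
      3 * l ≤ 4 * ((Tgraph l a).dist (gv l a b ((j + δ : ℕ) : ZMod l))
        (gv l a b' ((j + l / 2 + ε : ℕ) : ZMod l))) + 4 * a + 4 := by
  intro δ ε hδ hε
  have hd := dist_ge_min l a (by omega) b b' (j + δ) (j + l / 2 + ε) (l / 2 + ε - δ)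
    (Or.inr (by omega)) (by omega)
  omega

lemma EB_P4 (l a : ℕ) (hl' : l % 2 = 0) (h1 : l < 4 * a) (h2 : 2 * a < l)
    (j σ : ℕ) (hj : j < a) (hσ : σ < a)
    (hbr : (j < (4 * a - l + 3) / 4 ∧ σ = (4 * a - l + 3) / 4 - 1 - j) ∨
       ((4 * a - l + 3) / 4 ≤ j ∧ a - (4 * a - l + 3) / 4 ≤ j ∧
         σ = 2 * a - (4 * a - l + 3) / 4 - 1 - j) ∨
       ((4 * a - l + 3) / 4 ≤ j ∧ j < a - (4 * a - l + 3) / 4 ∧ σ = j)) :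
    ∀ δ ε : ℕ, δ ≤ 1 → ε ≤ 1 →
      3 * l ≤ 4 * ((Tgraph l a).dist (gv l a false ((j + δ : ℕ) : ZMod l))
        (gv l a true ((σ + l / 2 + ε : ℕ) : ZMod l))) + 4 * a + 4 := by
  intro δ ε hδ hε
  have hd := dist_ge_min l a (by omega) false true (j + δ) (σ + l / 2 + ε)
    (σ + l / 2 + ε - (j + δ)) (Or.inr (by omega)) (by omega)
  omega

lemma EB_P5 (l a : ℕ) (hl' : l % 2 = 0) (h1 : l < 4 * a) (h2 : 2 * a < l)
    (j σ : ℕ) (hj : j < a) (hσ : σ < a)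
    (hbr : (j < (4 * a - l + 3) / 4 ∧ σ = (4 * a - l + 3) / 4 - 1 - j) ∨
       ((4 * a - l + 3) / 4 ≤ j ∧ a - (4 * a - l + 3) / 4 ≤ j ∧
         σ = 2 * a - (4 * a - l + 3) / 4 - 1 - j) ∨
       ((4 * a - l + 3) / 4 ≤ j ∧ j < a - (4 * a - l + 3) / 4 ∧ σ = j)) :
    ∀ δ ε : ℕ, δ ≤ 1 → ε ≤ 1 →
      3 * l ≤ 4 * ((Tgraph l a).dist (gv l a false ((j + l / 2 + δ : ℕ) : ZMod l))
        (gv l a true ((σ + l / 2 + ε : ℕ) : ZMod l))) + 4 * a + 4 := by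
  intro δ ε hδ hε
  have hψ := dist_ge_psi l a hl' h1 h2 (j + l / 2 + δ) (σ + ε)
    (by omega) (by omega) (by omega)
  have hidx : l / 2 + (σ + ε) = σ + l / 2 + ε := by ring
  rw [hidx] at hψ
  omega

lemma H_swap (l a : ℕ) {b b' : Bool} {p q : ℕ}
    (H : ∀ δ ε : ℕ, δ ≤ 1 → ε ≤ 1 →
      3 * l ≤ 4 * ((Tgraph l a).dist (gv l a b ((p + δ : ℕ) : ZMod l))
        (gv l a b' ((q + ε : ℕ) : ZMod l))) + 4 * a + 4) :
    ∀ δ ε : ℕ, δ ≤ 1 → ε ≤ 1 →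
      3 * l ≤ 4 * ((Tgraph l a).dist (gv l a b' ((q + δ : ℕ) : ZMod l))
        (gv l a b ((p + ε : ℕ) : ZMod l))) + 4 * a + 4 := by
  intro δ ε hδ hε
  rw [SimpleGraph.dist_comm]
  exact H ε δ hε hδ

-- ## from endpoint bounds to the midpoint distance

lemma midDist_ge (l a : ℕ) (hl' : l % 2 = 0) (h1 : l < 4 * a) (h2 : 2 * a < l)
    (x x' : Sym2 (Glued l a)) (hne : x ≠ x') (b b' : Bool) (p q : ℕ)
    (hx : x = mid l a b ((p : ℕ) : ZMod l)) (hx' : x' = mid l a b' ((q : ℕ) : ZMod l))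
    (H : ∀ δ ε : ℕ, δ ≤ 1 → ε ≤ 1 →
      3 * l ≤ 4 * ((Tgraph l a).dist (gv l a b ((p + δ : ℕ) : ZMod l))
        (gv l a b' ((q + ε : ℕ) : ZMod l))) + 4 * a + 4) :
    (3 * (l : ℝ)) / 4 - a ≤ midDist (Tgraph l a) x x' := by
  rw [midDist, if_neg hne]
  have hnonempty : {r : ℝ | ∃ u v, u ∈ x ∧ v ∈ x' ∧ r = (Tgraph l a).dist u v}.Nonempty := by
    refine ⟨((Tgraph l a).dist (gv l a b ((p : ℕ) : ZMod l)) (gv l a b' ((q : ℕ) : ZMod l)) : ℝ),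
      gv l a b ((p : ℕ) : ZMod l), gv l a b' ((q : ℕ) : ZMod l), ?_, ?_, rfl⟩
    · rw [hx, mid, Sym2.mem_iff]; exact Or.inl rfl
    · rw [hx', mid, Sym2.mem_iff]; exact Or.inl rfl
  have hlb : ∀ r ∈ {r : ℝ | ∃ u v, u ∈ x ∧ v ∈ x' ∧ r = (Tgraph l a).dist u v},
      (3 * (l : ℝ)) / 4 - a - 1 ≤ r := by
    rintro r ⟨u, v, hu, hv, rfl⟩
    have hc1 : ((p : ZMod l) + 1) = ((p + 1 : ℕ) : ZMod l) := by push_cast; ring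
    have hc2 : ((q : ZMod l) + 1) = ((q + 1 : ℕ) : ZMod l) := by push_cast; ring
    rw [hx, mid, hc1, Sym2.mem_iff] at hu
    rw [hx', mid, hc2, Sym2.mem_iff] at hv
    have key : 3 * l ≤ 4 * ((Tgraph l a).dist u v) + 4 * a + 4 := by
      rcases hu with rfl | rfl <;> rcases hv with rfl | rfl
      · have := H 0 0 (by omega) (by omega); simpa using this
      · have := H 0 1 (by omega) (by omega); simpa using this
      · have := H 1 0 (by omega) (by omega); simpa using this
      · have := H 1 1 (by omega) (by omega); simpa using this
    have keyR : (3 * (l : ℝ)) ≤ 4 * ((Tgraph l a).dist u v : ℝ) + 4 * a + 4 := by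
      exact_mod_cast key
    linarith
  have := le_csInf hnonempty hlb
  linarith

lemma add_half_coe (l : ℕ) (hl2 : 2 ≤ l) (m : ZMod l) :
    m + ((l / 2 : ℕ) : ZMod l) = ((m.val + l / 2 : ℕ) : ZMod l) := by
  haveI : NeZero l := ⟨by omega⟩
  rw [Nat.cast_add, ZMod.natCast_zmod_val]

/-- the claim of the Introduction.  Let `l` be even and let
`T = C ∪ C'` be two `l`--gons glued along an embedded path `A` with
`l/4 < |A| = a < l/2`.  Then any two distinct edge midpoints `x, x'` of `T` lying
in the same class of the equivalence relation generated by the antipodal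
relation in `C` and the modified relation in `C'` satisfy
`|x,x'|_{T⁽¹⁾} ≥ Bal(T) = (3/4)l - |A|`. -/
theorem balanced_wall_distance (l a : ℕ) (hl : Even l) (h1 : l < 4 * a) (h2 : 2 * a < l)
    (x x' : Sym2 (Glued l a))
    (hrel : Relation.EqvGen (relT l a) x x') (hne : x ≠ x') :
    (3 * (l : ℝ)) / 4 - a ≤ midDist (Tgraph l a) x x' := by
  have hl' : l % 2 = 0 := Nat.even_iff.mp hl
  have hl2 : 2 ≤ l := by omega
  haveI : NeZero l := ⟨by omega⟩
  have hR := eqvGen_le_R l a hl' h1 h2 x x' hrel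
  rcases hR with rfl | ⟨m, hm, hx, hx'⟩ | ⟨t, h1t, h2t, hx, hx'⟩ | ⟨t, h1t, h2t, hx, hx'⟩
  · exact absurd rfl hne
  · -- a three-element class through the gluing path
    obtain ⟨σ, hPv, hPval, hσ, hbr⟩ := pP_lt l a hl' h1 h2 m.val hm
    have hmj : m = ((m.val : ℕ) : ZMod l) := (ZMod.natCast_zmod_val m).symm
    have hA2 : m + ((l / 2 : ℕ) : ZMod l) = ((m.val + l / 2 : ℕ) : ZMod l) :=
      add_half_coe l hl2 m
    have hA3 : pP l a m = ((σ + l / 2 : ℕ) : ZMod l) := by rw [hmj]; exact hPv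
    rcases hx with hx1 | hx1 | hx1 <;> rcases hx' with hx2 | hx2 | hx2
    · exact absurd (hx1.trans hx2.symm) hne
    · rw [hmj] at hx1; rw [hA2] at hx2
      exact midDist_ge l a hl' h1 h2 x x' hne false false m.val (m.val + l / 2) hx1 hx2
        (EB_antip l a hl' h1 h2 false false m.val)
    · rw [hmj] at hx1; rw [hA3] at hx2
      exact midDist_ge l a hl' h1 h2 x x' hne false true m.val (σ + l / 2) hx1 hx2
        (EB_P4 l a hl' h1 h2 m.val σ hm hσ hbr)
    · rw [hA2] at hx1; rw [hmj] at hx2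
      exact midDist_ge l a hl' h1 h2 x x' hne false false (m.val + l / 2) m.val hx1 hx2
        (H_swap l a (EB_antip l a hl' h1 h2 false false m.val))
    · exact absurd (hx1.trans hx2.symm) hne
    · rw [hA2] at hx1; rw [hA3] at hx2
      exact midDist_ge l a hl' h1 h2 x x' hne false true (m.val + l / 2) (σ + l / 2) hx1 hx2
        (EB_P5 l a hl' h1 h2 m.val σ hm hσ hbr)
    · rw [hA3] at hx1; rw [hmj] at hx2
      exact midDist_ge l a hl' h1 h2 x x' hne true false (σ + l / 2) m.val hx1 hx2
        (H_swap l a (EB_P4 l a hl' h1 h2 m.val σ hm hσ hbr))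
    · rw [hA3] at hx1; rw [hA2] at hx2
      exact midDist_ge l a hl' h1 h2 x x' hne true false (σ + l / 2) (m.val + l / 2) hx1 hx2
        (H_swap l a (EB_P5 l a hl' h1 h2 m.val σ hm hσ hbr))
    · exact absurd (hx1.trans hx2.symm) hne
  · -- an antipodal pair in the cell C
    have hA2 : t + ((l / 2 : ℕ) : ZMod l) = ((t.val + l / 2 : ℕ) : ZMod l) :=
      add_half_coe l hl2 t
    have htj : t = ((t.val : ℕ) : ZMod l) := (ZMod.natCast_zmod_val t).symm
    rcases hx with hx1 | hx1 <;> rcases hx' with hx2 | hx2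
    · exact absurd (hx1.trans hx2.symm) hne
    · rw [htj] at hx1; rw [hA2] at hx2
      exact midDist_ge l a hl' h1 h2 x x' hne false false t.val (t.val + l / 2) hx1 hx2
        (EB_antip l a hl' h1 h2 false false t.val)
    · rw [hA2] at hx1; rw [htj] at hx2
      exact midDist_ge l a hl' h1 h2 x x' hne false false (t.val + l / 2) t.val hx1 hx2
        (H_swap l a (EB_antip l a hl' h1 h2 false false t.val))
    · exact absurd (hx1.trans hx2.symm) hne
  · -- an antipodal pair in the cell C'
    obtain ⟨hinv, hcase⟩ := pP_free' l a hl' h1 h2 h1t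
    rcases hcase with hlt | ⟨hPt, -⟩
    · omega
    · have hA2 : pP l a t = ((t.val + l / 2 : ℕ) : ZMod l) := by
        rw [hPt]; exact add_half_coe l hl2 t
      have htj : t = ((t.val : ℕ) : ZMod l) := (ZMod.natCast_zmod_val t).symm
      rcases hx with hx1 | hx1 <;> rcases hx' with hx2 | hx2
      · exact absurd (hx1.trans hx2.symm) hne
      · rw [htj] at hx1; rw [hA2] at hx2
        exact midDist_ge l a hl' h1 h2 x x' hne true true t.val (t.val + l / 2) hx1 hx2
          (EB_antip l a hl' h1 h2 true true t.val)
      · rw [hA2] at hx1; rw [htj] at hx2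
        exact midDist_ge l a hl' h1 h2 x x' hne true true (t.val + l / 2) t.val hx1 hx2
          (H_swap l a (EB_antip l a hl' h1 h2 true true t.val))
      · exact absurd (hx1.trans hx2.symm) hne


end BalancedWalls
end
end

section
/- Let A be a finite tree and let α ⊆ A be a path such that every vertex of A is within distance q of α. Let s be the symmetry of α exchanging its endpoints. Then for any vertices z, z' of A and any vertex y of α, the path-metric distances in A satisfy |y,z|_A + |s(y),z'|_A ≤ |A| + max{|α|, q}, where |A| and |α| denote the number of edges of A and of α. -/
/-!
Send every vertex `v` to the index `π v` of a nearest vertex of the path `α = p`, choosing the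
least index among ties. With this tie-break a geodesic from `v` to `p.getVert (π v)` lies in the
fibre of `π v`, so that fibre has more than `d(v, α)` vertices, and each of the `|α| + 1` fibres
contains its own vertex of `α`. Counting vertices fibre by fibre gives
`|α| + 1 + d(z, α) + d(z', α) ≤ |V| = |A| + 1` when `π z ≠ π z'`, and the same bound without the
`z'` term otherwise. Together with `|p.getVert k, z| ≤ |k - π z| + d(z, α)` and `d(z, α) ≤ q`,
both cases reduce to linear arithmetic.
-/

namespace SimpleGraph

open Finset

variable {V : Type*} {G : SimpleGraph V}

namespace Walk

lemma dist_getVert_le {u v : V} (p : G.Walk u v) (i j : ℕ) :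
    G.dist (p.getVert i) (p.getVert j) ≤ (j - i) + (i - j) := by
  wlog hij : i ≤ j generalizing i j
  · rw [dist_comm]
    exact (this j i (by omega)).trans_eq (by omega)
  calc G.dist (p.getVert i) (p.getVert j)
      = G.dist (p.getVert i) ((p.drop i).getVert (j - i)) := by
        rw [drop_getVert, Nat.add_sub_cancel' hij]
    _ ≤ ((p.drop i).take (j - i)).length := dist_le _
    _ ≤ (j - i) + (i - j) := by rw [take_length]; omega

lemma dist_getVert_le_add_dist (hG : G.Connected) {u w : V} (p : G.Walk u w) (k m : ℕ)
    (v : V) : G.dist (p.getVert k) v ≤ (m - k) + (k - m) + G.dist v (p.getVert m) :=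
  calc G.dist (p.getVert k) v
      ≤ G.dist (p.getVert k) (p.getVert m) + G.dist (p.getVert m) v := hG.dist_triangle
    _ ≤ _ := by rw [G.dist_comm (u := p.getVert m)]; grw [p.dist_getVert_le]

lemma dist_add_dist_le_length {u v w : V} (p : G.Walk u w) (hv : v ∈ p.support) :
    G.dist u v + G.dist v w ≤ p.length := by
  classical
  have h := congrArg length (p.take_spec hv)
  rw [length_append] at h
  have := G.dist_le (p.takeUntil v hv)
  have := G.dist_le (p.dropUntil v hv)
  omega

end Walk

variable (G) (c : ℕ → V) (n : ℕ)

lemma exists_index_minimizing_dist (v : V) :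
    ∃ j ≤ n, ∀ i ≤ n, G.dist v (c j) ≤ G.dist v (c i) := by
  obtain ⟨j, hj, hmin⟩ := (range (n + 1)).exists_min_image (fun j ↦ G.dist v (c j)) ⟨0, by simp⟩
  exact ⟨j, mem_range_succ_iff.mp hj, fun i hi ↦ hmin i (mem_range_succ_iff.mpr hi)⟩

open Classical in
noncomputable def nearestIndex (v : V) : ℕ := Nat.find (G.exists_index_minimizing_dist c n v)

variable {G c n}

lemma nearestIndex_le (v : V) : G.nearestIndex c n v ≤ n :=
  (Nat.find_spec (G.exists_index_minimizing_dist c n v)).1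

lemma dist_nearestIndex_le {v : V} {i : ℕ} (hi : i ≤ n) :
    G.dist v (c (G.nearestIndex c n v)) ≤ G.dist v (c i) :=
  (Nat.find_spec (G.exists_index_minimizing_dist c n v)).2 i hi

lemma nearestIndex_le_of_dist_le {v : V} {i : ℕ} (hi : i ≤ n)
    (h : G.dist v (c i) ≤ G.dist v (c (G.nearestIndex c n v))) : G.nearestIndex c n v ≤ i :=
  Nat.find_min' _ ⟨hi, fun _ hj ↦ h.trans (dist_nearestIndex_le hj)⟩

lemma nearestIndex_apply (hG : G.Connected) (hc : Set.InjOn c (Set.Iic n)) {k : ℕ}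
    (hk : k ≤ n) : G.nearestIndex c n (c k) = k := by
  have h0 : G.dist (c k) (c (G.nearestIndex c n (c k))) = 0 :=
    Nat.le_zero.mp ((dist_nearestIndex_le hk).trans_eq dist_self)
  exact hc (nearestIndex_le (c k)) hk (hG.dist_eq_zero_iff.mp h0).symm

lemma nearestIndex_eq_of_dist_add_dist_le (hG : G.Connected) {u v : V}
    (h : G.dist v u + G.dist u (c (G.nearestIndex c n v)) ≤ G.dist v (c (G.nearestIndex c n v))) :
    G.nearestIndex c n u = G.nearestIndex c n v := by
  have hu : G.dist u (c (G.nearestIndex c n u)) ≤ G.dist u (c (G.nearestIndex c n v)) :=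
    dist_nearestIndex_le (nearestIndex_le v)
  have hv : G.dist v (c (G.nearestIndex c n v)) ≤ G.dist v (c (G.nearestIndex c n u)) :=
    dist_nearestIndex_le (nearestIndex_le u)
  have htri : G.dist v (c (G.nearestIndex c n u)) ≤
      G.dist v u + G.dist u (c (G.nearestIndex c n u)) := hG.dist_triangle
  refine le_antisymm (nearestIndex_le_of_dist_le (nearestIndex_le v) ?_)
    (nearestIndex_le_of_dist_le (nearestIndex_le u) ?_) <;> omega

section Fintype

variable [Fintype V]

lemma dist_nearestIndex_lt_card_fiber (hG : G.Connected) (v : V) :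
    G.dist v (c (G.nearestIndex c n v)) <
      #{u | G.nearestIndex c n u = G.nearestIndex c n v} := by
  classical
  obtain ⟨w, hw, hlen⟩ := hG.exists_path_of_dist v (c (G.nearestIndex c n v))
  have hsub : w.support.toFinset ⊆
      ({u | G.nearestIndex c n u = G.nearestIndex c n v} : Finset V) := by
    intro u hu
    rw [List.mem_toFinset] at hu
    simpa using
      nearestIndex_eq_of_dist_add_dist_le hG ((w.dist_add_dist_le_length hu).trans hlen.le)
  calc G.dist v (c (G.nearestIndex c n v)) < w.support.toFinset.card := by
        rw [List.toFinset_card_of_nodup hw.support_nodup, Walk.length_support, hlen]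
        exact Nat.lt_succ_self _
    _ ≤ _ := card_le_card hsub

lemma card_fiber_nearestIndex_pos (hG : G.Connected) (hc : Set.InjOn c (Set.Iic n)) {k : ℕ}
    (hk : k ≤ n) : 0 < #{u | G.nearestIndex c n u = k} :=
  card_pos.mpr ⟨c k, by simpa using nearestIndex_apply hG hc hk⟩

lemma sum_card_fiber_nearestIndex :
    ∑ k ∈ range (n + 1), #{u | G.nearestIndex c n u = k} = Fintype.card V :=
  (card_eq_sum_card_fiberwise fun v _ ↦ mem_range_succ_iff.mpr (nearestIndex_le v)).symm

lemma add_sum_dist_nearestIndex_le_card (hG : G.Connected) (hc : Set.InjOn c (Set.Iic n))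
    (T : Finset V) (hT : Set.InjOn (G.nearestIndex c n) T) :
    n + 1 + ∑ z ∈ T, G.dist z (c (G.nearestIndex c n z)) ≤ Fintype.card V := by
  classical
  set δ := fun z ↦ G.dist z (c (G.nearestIndex c n z))
  have hfiber (k : ℕ) (hk : k ≤ n) :
      ∑ z ∈ T with G.nearestIndex c n z = k, δ z < #{u | G.nearestIndex c n u = k} := by
    by_cases hz : ∃ z ∈ T, G.nearestIndex c n z = k
    · obtain ⟨z, hzT, rfl⟩ := hz
      have : {y ∈ T | G.nearestIndex c n y = G.nearestIndex c n z} = {z} := by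
        ext y
        simp only [mem_filter, mem_singleton]
        exact ⟨fun ⟨hyT, hy⟩ ↦ hT hyT hzT hy, by rintro rfl; exact ⟨hzT, rfl⟩⟩
      rw [this, sum_singleton]
      exact dist_nearestIndex_lt_card_fiber hG z
    · rw [filter_false_of_mem (by simpa using hz), sum_empty]
      exact card_fiber_nearestIndex_pos hG hc hk
  calc n + 1 + ∑ z ∈ T, δ z
      = ∑ k ∈ range (n + 1), (∑ z ∈ T with G.nearestIndex c n z = k, δ z + 1) := by
        rw [sum_add_distrib, sum_fiberwise_of_maps_to
          fun z _ ↦ mem_range_succ_iff.mpr (nearestIndex_le z)]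
        simp [add_comm]
    _ ≤ ∑ k ∈ range (n + 1), #{u | G.nearestIndex c n u = k} :=
        sum_le_sum fun k hk ↦ hfiber k (mem_range_succ_iff.mp hk)
    _ = Fintype.card V := sum_card_fiber_nearestIndex

end Fintype

end SimpleGraph

/-- **Statement 13** (Sublemma 4.7).  Let `A` be a finite tree and `α ⊆ A` a path
(recorded as an embedded walk `p` from `a` to `b`) such that every vertex of `A`
is within distance `q` of `α`.  The symmetry `s` of `α` exchanging its endpoints
sends the `i`-th vertex `p.getVert i` of `α` to `p.getVert (p.length - i)`.
Then for any vertices `z, z'` of `A` and any vertex `y = p.getVert i` of `α`,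
`|y,z|_A + |s(y),z'|_A ≤ |A| + max {|α|, q}`, where `|A|` and `|α|` denote the
numbers of edges. -/
theorem tree_symmetry_distance_bound {V : Type*} [Fintype V] (G : SimpleGraph V)
    (hG : G.IsTree) {a b : V} (p : G.Walk a b) (hp : p.IsPath) (q : ℕ)
    (hq : ∀ v : V, ∃ j ≤ p.length, G.dist v (p.getVert j) ≤ q)
    (z z' : V) (i : ℕ) (hi : i ≤ p.length) :
    G.dist (p.getVert i) z + G.dist (p.getVert (p.length - i)) z' ≤
      G.edgeSet.ncard + max p.length q := by
  classical
  have hcount := SimpleGraph.add_sum_dist_nearestIndex_le_card hG.connected hp.getVert_injOn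
  set π := G.nearestIndex p.getVert p.length
  have hE : G.edgeSet.ncard + 1 = Fintype.card V := by
    rw [← Nat.card_coe_set_eq, ← Nat.card_eq_fintype_card]
    exact (SimpleGraph.isTree_iff_connected_and_card.mp hG).2
  have hδ (v : V) : G.dist v (p.getVert (π v)) ≤ q := by
    obtain ⟨j, hj, hjq⟩ := hq v
    exact (SimpleGraph.dist_nearestIndex_le hj).trans hjq
  have hz := p.dist_getVert_le_add_dist hG.connected i (π z) z
  have hz' := p.dist_getVert_le_add_dist hG.connected (p.length - i) (π z') z'
  have hπ (v : V) : π v ≤ p.length := SimpleGraph.nearestIndex_le v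
  have := hπ z; have := hπ z'; have := hδ z; have := hδ z'
  by_cases h : π z = π z'
  · have := hcount {z} (by simp)
    rw [Finset.sum_singleton] at this
    omega
  · have := hcount {z, z'}
      (by rw [Finset.coe_pair]; exact Set.injOn_pair.mpr fun h' ↦ absurd h' h)
    rw [Finset.sum_pair fun hzz ↦ h (congrArg π hzz)] at this
    omega
end
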